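/- arXiv:2311.16296 — 2 statements merged into one kernel-verified Lean document; each statement's English description precedes it below -/
import Mathlib

section
/- Let μ : (0,∞) → [0,∞) be integrable with ∫₀^∞ μ(s) ds > 0 and μ not identically zero. Then for every ε > 0 there exists m₂ > 0 such that for all real λ with |λ| ≥ ε, ∫₀^∞ μ(s) |1 − e^{−iλ s}|² ds ≥ m₂. -/
open Real Set MeasureTheory Complex

/-!
Since `‖1 - e^{-iλs}‖² = 2 (1 - cos (λ s))`, the integral equals `2 (M - C(λ))`, where `M > 0`
is the mass of `μ` and `C` is its cosine transform. `C` is continuous, tends to `0` at infinity by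
the Riemann–Lebesgue lemma, and `C(λ) < M` for `λ ≠ 0` because `cos (λ s) = 1` only on a null set
of `s`. So the integral is a continuous function of `λ`, positive on the closed set `ε ≤ |λ|` and
at least `M` outside a compact set, hence bounded below there by a positive constant.
-/

open Filter Topology FourierTransform

theorem exists_pos_forall_le_of_eventually_cocompact {X : Type*} [TopologicalSpace X]
    {f : X → ℝ} {S : Set X} (hS : IsClosed S) (hf : ContinuousOn f S)
    (hpos : ∀ x ∈ S, 0 < f x) {c : ℝ} (hc : 0 < c) (hlarge : ∀ᶠ x in cocompact X, c ≤ f x) :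
    ∃ m > 0, ∀ x ∈ S, m ≤ f x := by
  obtain ⟨K, hK, hKc⟩ := hasBasis_cocompact.eventually_iff.mp hlarge
  rcases (S ∩ K).eq_empty_or_nonempty with hempty | hne
  · exact ⟨c, hc, fun x hx => hKc fun hxK => hempty.subset ⟨hx, hxK⟩⟩
  obtain ⟨x₀, hx₀, hmin⟩ := (hK.inter_left hS).exists_isMinOn hne (hf.mono inter_subset_left)
  refine ⟨min (f x₀) c, lt_min (hpos x₀ hx₀.1) hc, fun x hx => ?_⟩
  by_cases hxK : x ∈ K
  · exact (min_le_left _ _).trans (hmin ⟨hx, hxK⟩)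
  · exact (min_le_right _ _).trans (hKc hxK)

theorem norm_one_sub_exp_neg_I_mul_sq (lam s : ℝ) :
    ‖1 - Complex.exp (-(Complex.I * lam * s))‖ ^ 2 = 2 * (1 - Real.cos (lam * s)) := by
  have h : -(Complex.I * lam * s) = (↑(-(lam * s)) : ℂ) * Complex.I := by push_cast; ring
  rw [h, Complex.sq_norm, Complex.normSq_apply]
  simp only [Complex.sub_re, Complex.sub_im, Complex.one_re, Complex.one_im,
    Complex.exp_ofReal_mul_I_re, Complex.exp_ofReal_mul_I_im, Real.cos_neg, Real.sin_neg]
  nlinarith [Real.sin_sq_add_cos_sq (lam * s)]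

theorem ae_cos_mul_ne_one {lam : ℝ} (hlam : lam ≠ 0) : ∀ᵐ s : ℝ, Real.cos (lam * s) ≠ 1 := by
  have hsub : {s : ℝ | ¬Real.cos (lam * s) ≠ 1} ⊆ range fun n : ℤ => n * (2 * π) / lam := by
    intro s hs
    obtain ⟨n, hn⟩ := Real.cos_eq_one_iff _ |>.mp (not_not.mp hs)
    exact ⟨n, by field_simp; linarith⟩
  exact ae_iff.mpr (measure_mono_null hsub ((countable_range _).measure_zero _))

section CosineTransform

variable {f : ℝ → ℝ} {ν : Measure ℝ}

theorem MeasureTheory.Integrable.mul_cos (hf : Integrable f ν) (lam : ℝ) :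
    Integrable (fun s => f s * Real.cos (lam * s)) ν :=
  hf.mul_bdd (by fun_prop : Continuous fun s => Real.cos (lam * s)).aestronglyMeasurable
    (ae_of_all _ fun s => by simpa using Real.abs_cos_le_one (lam * s))

theorem continuous_integral_mul_cos (hf : Integrable f ν) :
    Continuous fun lam => ∫ s, f s * Real.cos (lam * s) ∂ν := by
  refine continuous_of_dominated (bound := fun s => ‖f s‖) (fun lam => (hf.mul_cos lam).1)
    (fun lam => ae_of_all _ fun s => ?_) hf.norm (ae_of_all _ fun s => by fun_prop)
  rw [norm_mul]
  exact mul_le_of_le_one_right (norm_nonneg _) (by simpa using Real.abs_cos_le_one (lam * s))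

theorem integral_mul_cos_lt_integral (hν : ν ≪ volume) (hf₀ : 0 ≤ᵐ[ν] f) (hf : Integrable f ν)
    (hmass : 0 < ∫ s, f s ∂ν) {lam : ℝ} (hlam : lam ≠ 0) :
    ∫ s, f s * Real.cos (lam * s) ∂ν < ∫ s, f s ∂ν := by
  have hg : Integrable (fun s => f s * (1 - Real.cos (lam * s))) ν := by
    refine (hf.sub (hf.mul_cos lam)).congr (ae_of_all _ fun s => ?_)
    simp only [Pi.sub_apply]
    ring
  have hg₀ : 0 ≤ᵐ[ν] fun s => f s * (1 - Real.cos (lam * s)) := by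
    filter_upwards [hf₀] with s hs
    exact mul_nonneg hs (sub_nonneg.mpr (Real.cos_le_one _))
  have hsupp : Function.support (fun s => f s * (1 - Real.cos (lam * s)))
      = Function.support f ∩ {s | Real.cos (lam * s) ≠ 1} := by
    ext s
    simp only [Function.mem_support, mem_inter_iff, mem_ofPred_eq, mul_ne_zero_iff, sub_ne_zero]
    exact and_congr_right' ne_comm
  have hpos : 0 < ∫ s, f s * (1 - Real.cos (lam * s)) ∂ν := by
    rw [integral_pos_iff_support_of_nonneg_ae hf₀ hf] at hmass
    rwa [integral_pos_iff_support_of_nonneg_ae hg₀ hg, hsupp,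
      measure_inter_conull (t := {s | Real.cos (lam * s) ≠ 1}) (hν.ae_le (ae_cos_mul_ne_one hlam))]
  simp only [mul_sub, mul_one] at hpos
  rw [integral_sub hf (hf.mul_cos lam)] at hpos
  linarith

theorem tendsto_integral_mul_cos_cocompact (hf : Integrable f) :
    Tendsto (fun lam => ∫ s, f s * Real.cos (lam * s)) (cocompact ℝ) (𝓝 0) := by
  have hfourier (w : ℝ) :
      ∫ s, f s * Real.cos (2 * π * w * s) = (∫ s, 𝐞 (-(s * w)) • (f s : ℂ)).re := by
    have hint : Integrable fun s : ℝ => 𝐞 (-(s * w)) • (f s : ℂ) := by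
      simpa [mul_comm] using (Real.fourierIntegral_convergent_iff w).2 hf.ofReal
    refine Eq.trans ?_ (integral_re hint)
    congr 1
    ext s
    rw [RCLike.re_to_complex, Circle.smul_def, Real.fourierChar_apply, smul_eq_mul, re_mul_ofReal,
      exp_ofReal_mul_I_re, mul_comm, ← Real.cos_neg]
    ring_nf
  have hw : Tendsto (fun w => ∫ s, f s * Real.cos (2 * π * w * s)) (cocompact ℝ) (𝓝 0) := by
    simpa only [hfourier, Function.comp_def, zero_re] using
      (continuous_re.tendsto 0).comp (Real.tendsto_integral_exp_smul_cocompact _)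
  refine (hw.comp (tendsto_cocompact_mul_right₀ (inv_ne_zero two_pi_pos.ne'))).congr fun lam => ?_
  simp only [Function.comp_apply]
  congr 1
  ext s
  field_simp

theorem tendsto_setIntegral_mul_cos_cocompact {t : Set ℝ} (ht : MeasurableSet t)
    (hf : IntegrableOn f t) :
    Tendsto (fun lam => ∫ s in t, f s * Real.cos (lam * s)) (cocompact ℝ) (𝓝 0) := by
  simpa only [← integral_indicator ht, indicator_mul_left] using
    tendsto_integral_mul_cos_cocompact (hf.integrable_indicator ht)

end CosineTransform

theorem stmt_10 (μ : ℝ → ℝ)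
    (hnonneg : ∀ s, 0 < s → 0 ≤ μ s)
    (hint : IntegrableOn μ (Ioi 0))
    (hmass : 0 < ∫ s in Ioi (0:ℝ), μ s) :
    ∀ ε > (0:ℝ), ∃ m₂ > (0:ℝ), ∀ lam : ℝ, ε ≤ |lam| →
      m₂ ≤ ∫ s in Ioi (0:ℝ), μ s * ‖1 - Complex.exp (-(Complex.I * lam * s))‖ ^ 2 := by
  intro ε hε
  set M := ∫ s in Ioi (0:ℝ), μ s
  set C := fun lam : ℝ => ∫ s in Ioi (0:ℝ), μ s * Real.cos (lam * s)
  have hF (lam : ℝ) :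
      ∫ s in Ioi (0:ℝ), μ s * ‖1 - Complex.exp (-(Complex.I * lam * s))‖ ^ 2 = 2 * (M - C lam) := by
    calc _ = ∫ s in Ioi (0:ℝ), 2 * (μ s - μ s * Real.cos (lam * s)) := by
          congr 1; ext s; rw [norm_one_sub_exp_neg_I_mul_sq]; ring
      _ = 2 * (M - C lam) := by rw [integral_const_mul, integral_sub hint (hint.mul_cos lam)]
  have hμ₀ : 0 ≤ᵐ[volume.restrict (Ioi 0)] μ :=
    (ae_restrict_iff' measurableSet_Ioi).mpr (ae_of_all _ hnonneg)
  have hsmall : ∀ᶠ lam in cocompact ℝ, C lam < M / 2 :=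
    (tendsto_setIntegral_mul_cos_cocompact measurableSet_Ioi hint).eventually
      (gt_mem_nhds (half_pos hmass))
  simp only [hF]
  refine exists_pos_forall_le_of_eventually_cocompact (S := {lam | ε ≤ |lam|})
    (isClosed_le continuous_const continuous_abs)
    (continuous_const.mul (continuous_const.sub (continuous_integral_mul_cos hint))).continuousOn
    (fun lam hlam => ?_) hmass (hsmall.mono fun lam hlam => by linarith)
  have hC := integral_mul_cos_lt_integral Measure.restrict_le_self.absolutelyContinuous hμ₀ hint
    hmass (abs_pos.mp (hε.trans_le hlam))
  linarith
end

section
/- Fix λ ∈ ℝ. For f ∈ L²(0,∞) define F(s) = ∫₀^s e^{−iλ(s−τ)} f(τ) dτ. Suppose additionally that F is formed with respect to a weight μ ∈ L¹(0,∞) satisfying μ′ ≤ −K_μ μ, K_μ > 0, and that ∫₀^∞ μ(s)|f(s)|² ds < ∞. Then there exists a constant m₁ > 0, independent of λ and f, such that ∫₀^∞ μ(s)|F(s)|² ds ≤ m₁ ∫₀^∞ μ(s)|f(s)|² ds. -/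
set_option maxHeartbeats 1000000
open Real Set MeasureTheory Complex


lemma aux_exp_Ioi {β : ℝ} (hβ : 0 < β) (τ : ℝ) :
    ∫ s in Ioi τ, Real.exp (-(β*(s-τ))) = 1/β := by
  have h1 : ∀ s : ℝ, Real.exp (-(β*(s-τ))) = Real.exp (β*τ) * Real.exp (-(β*s)) := by
    intro s; rw [← Real.exp_add]; ring_nf
  simp_rw [h1]
  rw [MeasureTheory.integral_const_mul]
  have h2 : (∫ s in Ioi τ, Real.exp (-(β*s))) = β⁻¹ • ∫ x in Ioi (β*τ), Real.exp (-x) := by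
    exact integral_comp_mul_left_Ioi (fun x => Real.exp (-x)) τ hβ
  rw [h2, integral_exp_neg_Ioi, smul_eq_mul, mul_comm β⁻¹, ← mul_assoc, ← Real.exp_add]
  simp [hβ.ne', one_div]

lemma aux_exp_interval {β : ℝ} (hβ : 0 < β) (s : ℝ) :
    ∫ τ in (0:ℝ)..s, Real.exp (-(β*(s-τ))) ≤ 1/β := by
  have h1 : (∫ τ in (0:ℝ)..s, Real.exp (-(β*(s-τ)))) = ∫ x in (s-s)..(s-0), Real.exp (-(β*x)) := by
    exact intervalIntegral.integral_comp_sub_left (fun x => Real.exp (-(β*x))) s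
  have h2 : (∫ x in (0:ℝ)..s, Real.exp (-(β*x))) = (-β)⁻¹ • ∫ x in ((-β)*0)..((-β)*s), Real.exp x := by
    have h := intervalIntegral.integral_comp_mul_left (a := (0:ℝ)) (b := s)
      (fun x => Real.exp x) (neg_ne_zero.mpr hβ.ne')
    rw [← h]
    congr 1; funext x; ring_nf
  rw [h1]
  simp only [sub_self, sub_zero]
  rw [h2, integral_exp, smul_eq_mul]
  have h5 : Real.exp (-β*0) = 1 := by norm_num
  rw [h5, one_div, inv_neg]
  have he : 0 < Real.exp (-β*s) := Real.exp_pos _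
  have hb : 0 < β⁻¹ := inv_pos.mpr hβ
  nlinarith


lemma aux_gronwall (μ μ' : ℝ → ℝ) (Kμ : ℝ)
    (hnonneg : ∀ s, 0 < s → 0 ≤ μ s)
    (hderiv : ∀ s, 0 < s → HasDerivAt μ (μ' s) s)
    (hDaf : ∀ s, 0 < s → μ' s ≤ -Kμ * μ s) :
    ∀ τ s, 0 < τ → τ ≤ s → μ s ≤ μ τ * Real.exp (-(Kμ*(s-τ))) := by
  intro τ s hτ hτs
  set g : ℝ → ℝ := fun x => μ x * Real.exp (Kμ * x) with hg
  have hgderiv : ∀ x, 0 < x →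
      HasDerivAt g ((μ' x + Kμ * μ x) * Real.exp (Kμ * x)) x := by
    intro x hx
    have h1 : HasDerivAt (fun y : ℝ => Real.exp (Kμ * y)) (Kμ * Real.exp (Kμ * x)) x := by
      exact ((Real.hasDerivAt_exp (Kμ*x)).comp x ((hasDerivAt_id x).const_mul Kμ)).congr_deriv
        (by simp only [id_eq, mul_one]; ring)
    have := (hderiv x hx).mul h1
    exact this.congr_deriv (by ring)
  have hanti : AntitoneOn g (Ioi 0) := by
    apply antitoneOn_of_deriv_nonpos (convex_Ioi 0)
    · exact fun x hx => ((hgderiv x hx).continuousAt).continuousWithinAt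
    · intro y hy
      rw [interior_Ioi] at hy
      exact ((hgderiv y hy).differentiableAt.differentiableWithinAt)
    · intro x hx
      rw [interior_Ioi] at hx
      rw [(hgderiv x hx).deriv]
      apply mul_nonpos_of_nonpos_of_nonneg
      · have := hDaf x hx
        linarith
      · exact Real.exp_nonneg _
  have hgs : g s ≤ g τ := hanti (mem_Ioi.mpr hτ) (mem_Ioi.mpr (lt_of_lt_of_le hτ hτs)) hτs
  have e1 : Real.exp (-(Kμ*(s-τ))) = Real.exp (Kμ*τ) * Real.exp (-(Kμ*s)) := by
    rw [← Real.exp_add]; ring_nf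
  have e2 : Real.exp (Kμ*s) * Real.exp (-(Kμ*s)) = 1 := by
    rw [← Real.exp_add]; simp
  have hp : 0 < Real.exp (-(Kμ*s)) := Real.exp_pos _
  have hgs' := mul_le_mul_of_nonneg_right hgs hp.le
  simp only [hg] at hgs'
  rw [mul_assoc, mul_assoc, e2, mul_one] at hgs'
  rw [e1]
  exact hgs'


theorem stmt_11 (μ μ' : ℝ → ℝ) (Kμ : ℝ) (hKμ : 0 < Kμ)
    (hnonneg : ∀ s, 0 < s → 0 ≤ μ s)
    (hint : IntegrableOn μ (Ioi 0))
    (hderiv : ∀ s, 0 < s → HasDerivAt μ (μ' s) s)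
    (hderivCont : ContinuousOn μ' (Ioi 0))
    (hDaf : ∀ s, 0 < s → μ' s ≤ -Kμ * μ s) :
    ∃ m₁ > (0:ℝ), ∀ (lam : ℝ) (f : ℝ → ℂ),
      MeasureTheory.MemLp f 2 (MeasureTheory.volume.restrict (Ioi (0:ℝ))) →
      IntegrableOn (fun s => μ s * ‖f s‖ ^ 2) (Ioi 0) →
      ∫ s in Ioi (0:ℝ),
          μ s * ‖∫ τ in (0:ℝ)..s, Complex.exp (-(Complex.I * lam * (s - τ))) * f τ‖ ^ 2 ≤
        m₁ * ∫ s in Ioi (0:ℝ), μ s * ‖f s‖ ^ 2 := by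
  have hgron : ∀ τ s, 0 < τ → τ ≤ s → μ s ≤ μ τ * Real.exp (-(Kμ*(s-τ))) :=
    aux_gronwall μ μ' Kμ hnonneg hderiv hDaf
  set β : ℝ := Kμ/2 with hβdef
  have hβ : 0 < β := by positivity
  refine ⟨(1/β)^2, by positivity, ?_⟩
  intro lam f hf hμf
  have hRnn : 0 ≤ ∫ s in Ioi (0:ℝ), μ s * ‖f s‖^2 :=
    setIntegral_nonneg measurableSet_Ioi (fun s hs => mul_nonneg (hnonneg s hs) (by positivity))
  set F : ℝ → ℂ := fun s => ∫ τ in (0:ℝ)..s, Complex.exp (-(Complex.I * lam * (s - τ))) * f τ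
    with hFdef
  by_cases hInt : IntegrableOn (fun s => μ s * ‖F s‖^2) (Ioi 0)
  swap
  · rw [MeasureTheory.integral_undef hInt]
    positivity
  -- notation
  set φ : ℝ → ENNReal := fun τ => (‖f τ‖₊ : ENNReal) with hφdef
  have hφm : AEMeasurable φ (volume.restrict (Ioi 0)) := hf.1.enorm
  have hcμ : ContinuousOn μ (Ioi 0) :=
    fun x hx => ((hderiv x hx).continuousAt.continuousWithinAt)
  have hμm : AEMeasurable μ (volume.restrict (Ioi 0)) := hcμ.aemeasurable measurableSet_Ioi
  -- the key pointwise bound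
  have key : ∀ s ∈ Ioi (0:ℝ), ENNReal.ofReal (μ s * ‖F s‖^2) ≤
      ENNReal.ofReal (1/β) *
        ∫⁻ τ in Ioc 0 s, ENNReal.ofReal (μ τ * Real.exp (-(β*(s-τ)))) * φ τ^2 := by
    intro s hs
    have hs' : (0:ℝ) < s := hs
    have e0 : ENNReal.ofReal (μ s * ‖F s‖^2) = ENNReal.ofReal (μ s) * (‖F s‖₊ : ENNReal)^2 := by
      rw [ENNReal.ofReal_mul (hnonneg s hs'), ENNReal.ofReal_pow (norm_nonneg _),
        ofReal_norm, enorm_eq_nnnorm]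
    have h1 : (‖F s‖₊ : ENNReal) ≤ ∫⁻ τ in Ioc 0 s, φ τ := by
      have hFs : F s = ∫ τ in Ioc 0 s, Complex.exp (-(Complex.I * lam * (s - τ))) * f τ := by
        simp only [hFdef]
        exact intervalIntegral.integral_of_le hs'.le
      rw [hFs]
      refine le_trans (enorm_integral_le_lintegral_enorm _) (le_of_eq ?_)
      refine lintegral_congr fun τ => ?_
      have habs : ‖Complex.exp (-(Complex.I * (lam:ℂ) * ((s:ℂ) - (τ:ℂ))))‖ = 1 := by
        rw [Complex.norm_exp]
        norm_num [Complex.mul_re, Complex.I_re, Complex.I_im]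
      have hn : ‖Complex.exp (-(Complex.I * (lam:ℂ) * ((s:ℂ) - (τ:ℂ)))) * f τ‖₊ = ‖f τ‖₊ := by
        rw [nnnorm_mul]
        have h1' : ‖Complex.exp (-(Complex.I * (lam:ℂ) * ((s:ℂ) - (τ:ℂ))))‖₊ = 1 :=
          NNReal.coe_injective (by simpa using habs)
        rw [h1', one_mul]
      rw [enorm_eq_nnnorm, hn]
    set u : ℝ → ENNReal := fun τ => ENNReal.ofReal (Real.exp (-(β*(s-τ))/2)) with hu
    set v : ℝ → ENNReal := fun τ => ENNReal.ofReal (Real.exp (β*(s-τ)/2)) * φ τ with hv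
    have huv : ∀ τ, u τ * v τ = φ τ := by
      intro τ
      simp only [hu, hv]
      rw [← mul_assoc, ← ENNReal.ofReal_mul (Real.exp_nonneg _), ← Real.exp_add]
      have : (-(β*(s-τ))/2 + β*(s-τ)/2) = 0 := by ring
      rw [this, Real.exp_zero, ENNReal.ofReal_one, one_mul]
    have hum : AEMeasurable u (volume.restrict (Ioc 0 s)) := by
      apply Measurable.aemeasurable
      exact ENNReal.measurable_ofReal.comp (Real.continuous_exp.comp (by fun_prop)).measurable
    have hφres : AEMeasurable φ (volume.restrict (Ioc 0 s)) :=
      hφm.mono_measure (Measure.restrict_mono Ioc_subset_Ioi_self le_rfl)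
    have hvm : AEMeasurable v (volume.restrict (Ioc 0 s)) := by
      refine AEMeasurable.mul ?_ hφres
      apply Measurable.aemeasurable
      exact ENNReal.measurable_ofReal.comp (Real.continuous_exp.comp (by fun_prop)).measurable
    have hCS := ENNReal.lintegral_mul_le_Lp_mul_Lq (volume.restrict (Ioc 0 s))
      Real.HolderConjugate.two_two hum hvm
    have hsq : (∫⁻ τ in Ioc 0 s, φ τ)^2 ≤
        (∫⁻ τ in Ioc 0 s, u τ^(2:ℝ)) * (∫⁻ τ in Ioc 0 s, v τ^(2:ℝ)) := by
      have heq : (∫⁻ τ in Ioc 0 s, φ τ) = ∫⁻ τ in Ioc 0 s, (u * v) τ :=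
        lintegral_congr fun τ => by rw [Pi.mul_apply, huv]
      have h := pow_le_pow_left' (heq.le.trans hCS) 2
      refine h.trans (le_of_eq ?_)
      rw [mul_pow, ← ENNReal.rpow_natCast (_ ^ _) 2, ← ENNReal.rpow_natCast (_ ^ _) 2,
        ← ENNReal.rpow_mul, ← ENNReal.rpow_mul]
      norm_num
    have hu2 : ∀ τ : ℝ, u τ ^ (2:ℝ) = ENNReal.ofReal (Real.exp (-(β*(s-τ)))) := by
      intro τ
      rw [show ((2:ℝ)) = ((2:ℕ):ℝ) by norm_num, ENNReal.rpow_natCast]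
      simp only [hu]
      rw [← ENNReal.ofReal_pow (Real.exp_nonneg _), sq, ← Real.exp_add]
      congr 2
      ring
    have hv2 : ∀ τ : ℝ, v τ ^ (2:ℝ) = ENNReal.ofReal (Real.exp (β*(s-τ))) * φ τ^2 := by
      intro τ
      rw [show ((2:ℝ)) = ((2:ℕ):ℝ) by norm_num, ENNReal.rpow_natCast]
      simp only [hv]
      rw [mul_pow, ← ENNReal.ofReal_pow (Real.exp_nonneg _), sq (Real.exp _), ← Real.exp_add]
      congr 3
      ring
    have hb : (∫⁻ τ in Ioc 0 s, ENNReal.ofReal (Real.exp (-(β*(s-τ))))) ≤ ENNReal.ofReal (1/β) := by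
      have hcont : Continuous fun τ : ℝ => Real.exp (-(β*(s-τ))) := by fun_prop
      rw [← ofReal_integral_eq_lintegral_ofReal hcont.integrableOn_Ioc
        (Filter.Eventually.of_forall fun τ => Real.exp_nonneg _)]
      apply ENNReal.ofReal_le_ofReal
      rw [← intervalIntegral.integral_of_le hs'.le]
      exact aux_exp_interval hβ s
    have hgm : ∀ τ ∈ Ioc (0:ℝ) s,
        ENNReal.ofReal (μ s) * (ENNReal.ofReal (Real.exp (β*(s-τ))) * φ τ^2)
        ≤ ENNReal.ofReal (μ τ * Real.exp (-(β*(s-τ)))) * φ τ^2 := by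
      intro τ hτ
      rw [← mul_assoc, ← ENNReal.ofReal_mul (hnonneg s hs')]
      refine mul_le_mul' (ENNReal.ofReal_le_ofReal ?_) le_rfl
      have hg := hgron τ s hτ.1 hτ.2
      have hmul := mul_le_mul_of_nonneg_right hg (Real.exp_nonneg (β*(s-τ)))
      refine le_trans hmul (le_of_eq ?_)
      rw [mul_assoc, ← Real.exp_add]
      congr 2
      rw [hβdef]
      ring
    calc ENNReal.ofReal (μ s * ‖F s‖^2)
        = ENNReal.ofReal (μ s) * ((‖F s‖₊ : ENNReal))^2 := e0
      _ ≤ ENNReal.ofReal (μ s) * (∫⁻ τ in Ioc 0 s, φ τ)^2 :=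
          mul_le_mul' le_rfl (pow_le_pow_left' h1 2)
      _ ≤ ENNReal.ofReal (μ s) *
          ((∫⁻ τ in Ioc 0 s, u τ^(2:ℝ)) * (∫⁻ τ in Ioc 0 s, v τ^(2:ℝ))) := mul_le_mul' le_rfl hsq
      _ = (∫⁻ τ in Ioc 0 s, ENNReal.ofReal (Real.exp (-(β*(s-τ))))) *
          (ENNReal.ofReal (μ s) * ∫⁻ τ in Ioc 0 s, v τ^(2:ℝ)) := by
            simp_rw [hu2]; ring
      _ ≤ ENNReal.ofReal (1/β) * (ENNReal.ofReal (μ s) * ∫⁻ τ in Ioc 0 s, v τ^(2:ℝ)) :=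
          mul_le_mul' hb le_rfl
      _ ≤ ENNReal.ofReal (1/β) *
          ∫⁻ τ in Ioc 0 s, ENNReal.ofReal (μ τ * Real.exp (-(β*(s-τ)))) * φ τ^2 := by
            refine mul_le_mul' le_rfl ?_
            simp_rw [hv2]
            rw [← MeasureTheory.lintegral_const_mul' _ _ ENNReal.ofReal_ne_top]
            exact lintegral_mono_ae ((ae_restrict_iff' measurableSet_Ioc).mpr
              (Filter.Eventually.of_forall hgm))
  -- lintegral chain
  have L1 : (∫⁻ s in Ioi (0:ℝ), ENNReal.ofReal (μ s * ‖F s‖^2)) ≤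
      ENNReal.ofReal (1/β) * ∫⁻ s in Ioi (0:ℝ),
        ∫⁻ τ in Ioc 0 s, ENNReal.ofReal (μ τ * Real.exp (-(β*(s-τ)))) * φ τ^2 := by
    rw [← MeasureTheory.lintegral_const_mul' _ _ ENNReal.ofReal_ne_top]
    refine lintegral_mono_ae ?_
    rw [ae_restrict_iff' measurableSet_Ioi]
    exact Filter.Eventually.of_forall key
  -- Tonelli
  have L2 : (∫⁻ s in Ioi (0:ℝ),
        ∫⁻ τ in Ioc 0 s, ENNReal.ofReal (μ τ * Real.exp (-(β*(s-τ)))) * φ τ^2) ≤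
      ENNReal.ofReal (1/β) * ∫⁻ τ in Ioi (0:ℝ), ENNReal.ofReal (μ τ) * φ τ^2 := by
    have hrw : ∀ s : ℝ, (∫⁻ τ in Ioc 0 s, ENNReal.ofReal (μ τ * Real.exp (-(β*(s-τ)))) * φ τ^2)
        = ∫⁻ τ in Ioi (0:ℝ), (Iic s).indicator
            (fun τ => ENNReal.ofReal (μ τ * Real.exp (-(β*(s-τ)))) * φ τ^2) τ := by
      intro s
      rw [lintegral_indicator measurableSet_Iic, Measure.restrict_restrict measurableSet_Iic,
        Set.inter_comm, Set.Ioi_inter_Iic]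
    simp_rw [hrw]
    have hset : MeasurableSet {p : ℝ × ℝ | p.2 ≤ p.1} :=
      measurableSet_le measurable_snd measurable_fst
    have hμsnd : AEMeasurable (fun p : ℝ × ℝ => μ p.2)
        ((volume.restrict (Ioi 0)).prod (volume.restrict (Ioi 0))) :=
      hμm.comp_quasiMeasurePreserving Measure.quasiMeasurePreserving_snd
    have hφsnd : AEMeasurable (fun p : ℝ × ℝ => φ p.2)
        ((volume.restrict (Ioi 0)).prod (volume.restrict (Ioi 0))) :=
      hφm.comp_quasiMeasurePreserving Measure.quasiMeasurePreserving_snd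
    have hexp : Measurable (fun p : ℝ × ℝ => Real.exp (-(β*(p.1-p.2)))) :=
      (Real.continuous_exp.comp (by fun_prop)).measurable
    have hinner : AEMeasurable
        (fun p : ℝ × ℝ => ENNReal.ofReal (μ p.2 * Real.exp (-(β*(p.1-p.2)))) * φ p.2 ^ 2)
        ((volume.restrict (Ioi 0)).prod (volume.restrict (Ioi 0))) :=
      (ENNReal.measurable_ofReal.comp_aemeasurable (hμsnd.mul hexp.aemeasurable)).mul
        (hφsnd.pow_const 2)
    have huncurry : (Function.uncurry fun s τ => (Iic s).indicator
          (fun τ' => ENNReal.ofReal (μ τ' * Real.exp (-(β*(s-τ')))) * φ τ'^2) τ)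
        = {p : ℝ × ℝ | p.2 ≤ p.1}.indicator
            (fun p => ENNReal.ofReal (μ p.2 * Real.exp (-(β*(p.1-p.2)))) * φ p.2^2) := by
      funext p
      rcases p with ⟨a, b⟩
      simp only [Function.uncurry, Set.indicator_apply, mem_Iic, mem_setOf_eq]
    have hmeas : AEMeasurable (Function.uncurry fun s τ => (Iic s).indicator
          (fun τ' => ENNReal.ofReal (μ τ' * Real.exp (-(β*(s-τ')))) * φ τ'^2) τ)
        ((volume.restrict (Ioi 0)).prod (volume.restrict (Ioi 0))) := by
      rw [huncurry]
      exact hinner.indicator hset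
    rw [lintegral_lintegral_swap hmeas]
    rw [← MeasureTheory.lintegral_const_mul' _ _ ENNReal.ofReal_ne_top]
    refine lintegral_mono_ae ((ae_restrict_iff' measurableSet_Ioi).mpr
      (Filter.Eventually.of_forall fun τ hτ => ?_))
    have hτ' : (0:ℝ) < τ := hτ
    have hsub : Ici τ ⊆ Ioi (0:ℝ) := fun x hx => lt_of_lt_of_le hτ' hx
    have hne : ENNReal.ofReal (μ τ) * φ τ^2 ≠ ⊤ :=
      ENNReal.mul_ne_top ENNReal.ofReal_ne_top (ENNReal.pow_ne_top ENNReal.coe_ne_top)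
    have hIg : IntegrableOn (fun s => Real.exp (-(β*(s-τ)))) (Ioi τ) := by
      have heq : (fun s : ℝ => Real.exp (-(β*(s-τ)))) =
          fun s => Real.exp (β*τ) * Real.exp (-β*s) := by
        funext x; rw [← Real.exp_add]; ring_nf
      rw [heq]
      exact (exp_neg_integrableOn_Ioi τ hβ).const_mul _
    calc (∫⁻ s in Ioi (0:ℝ), (Iic s).indicator
            (fun τ' => ENNReal.ofReal (μ τ' * Real.exp (-(β*(s-τ')))) * φ τ'^2) τ)
        = ∫⁻ s in Ioi (0:ℝ), (Ici τ).indicator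
            (fun s' => ENNReal.ofReal (μ τ * Real.exp (-(β*(s'-τ)))) * φ τ^2) s :=
          lintegral_congr fun s => by simp only [Set.indicator_apply, mem_Iic, mem_Ici]
      _ = ∫⁻ s in Ici τ, ENNReal.ofReal (μ τ * Real.exp (-(β*(s-τ)))) * φ τ^2 := by
          rw [lintegral_indicator measurableSet_Ici, Measure.restrict_restrict measurableSet_Ici,
            Set.inter_eq_left.mpr hsub]
      _ = (ENNReal.ofReal (μ τ) * φ τ^2) * ∫⁻ s in Ici τ, ENNReal.ofReal (Real.exp (-(β*(s-τ)))) := by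
          simp_rw [ENNReal.ofReal_mul (hnonneg τ hτ'), mul_right_comm]
          rw [MeasureTheory.lintegral_const_mul' _ _ hne]
      _ = (ENNReal.ofReal (μ τ) * φ τ^2) * ENNReal.ofReal (1/β) := by
          rw [← MeasureTheory.restrict_Ioi_eq_restrict_Ici,
            ← ofReal_integral_eq_lintegral_ofReal hIg
              (Filter.Eventually.of_forall fun x => Real.exp_nonneg _),
            aux_exp_Ioi hβ τ]
      _ ≤ ENNReal.ofReal (1/β) * (ENNReal.ofReal (μ τ) * φ τ^2) := (mul_comm _ _).le
  -- convert to real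
  have hLHS : (∫ s in Ioi (0:ℝ), μ s * ‖F s‖^2) =
      (∫⁻ s in Ioi (0:ℝ), ENNReal.ofReal (μ s * ‖F s‖^2)).toReal := by
    refine integral_eq_lintegral_of_nonneg_ae ((ae_restrict_iff' measurableSet_Ioi).mpr
      (Filter.Eventually.of_forall fun s hs => mul_nonneg (hnonneg s hs) (by positivity)))
      hInt.aestronglyMeasurable
  have hJ : (∫⁻ τ in Ioi (0:ℝ), ENNReal.ofReal (μ τ) * φ τ^2) =
      ENNReal.ofReal (∫ s in Ioi (0:ℝ), μ s * ‖f s‖^2) := by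
    rw [ofReal_integral_eq_lintegral_ofReal hμf]
    · refine lintegral_congr_ae ((ae_restrict_iff' measurableSet_Ioi).mpr
        (Filter.Eventually.of_forall fun s hs => ?_))
      show ENNReal.ofReal (μ s) * φ s ^ 2 = ENNReal.ofReal (μ s * ‖f s‖ ^ 2)
      rw [ENNReal.ofReal_mul (hnonneg s hs), ENNReal.ofReal_pow (norm_nonneg _),
        ofReal_norm, enorm_eq_nnnorm]
    · exact (ae_restrict_iff' measurableSet_Ioi).mpr
        (Filter.Eventually.of_forall fun s hs => mul_nonneg (hnonneg s hs) (by positivity))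
  rw [hLHS]
  have hchain : (∫⁻ s in Ioi (0:ℝ), ENNReal.ofReal (μ s * ‖F s‖^2)) ≤
      ENNReal.ofReal ((1/β)^2 * ∫ s in Ioi (0:ℝ), μ s * ‖f s‖^2) := by
    refine (L1.trans (mul_le_mul' le_rfl L2)).trans ?_
    rw [hJ, ← mul_assoc, ← ENNReal.ofReal_mul (by positivity),
      ← ENNReal.ofReal_mul (by positivity)]
    apply le_of_eq
    congr 1
    ring
  calc (∫⁻ s in Ioi (0:ℝ), ENNReal.ofReal (μ s * ‖F s‖^2)).toReal
      ≤ (ENNReal.ofReal ((1/β)^2 * ∫ s in Ioi (0:ℝ), μ s * ‖f s‖^2)).toReal :=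
        ENNReal.toReal_mono ENNReal.ofReal_ne_top hchain
    _ = (1/β)^2 * ∫ s in Ioi (0:ℝ), μ s * ‖f s‖^2 := ENNReal.toReal_ofReal (by positivity)
end
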